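/- arXiv:2306.07600 — 2 statements merged into one kernel-verified Lean document; each statement's English description precedes it below -/
import Mathlib

section
/- Let 0 ≤ γ < 1 and let w be a weight on ℝ^{n+1}. Then w ∈ A_1^+(γ) if and only if there exists a constant C > 0 such that M^{γ−}w(x,t) ≤ C·w(x,t) for almost every (x,t) ∈ ℝ^{n+1}; moreover, when w ∈ A_1^+(γ) one can take C = [w]_{A_1^+(γ)}. -/
open MeasureTheory ENNReal Set

noncomputable section

/-- The closed spatial cube `Q(x,L)` with center `x` and side length `L`. -/
def spCube (n : ℕ) (x : Fin n → ℝ) (L : ℝ) : Set (Fin n → ℝ) :=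
  {y | ∀ i, |y i - x i| ≤ L}

/-- The parabolic rectangle `R(x,t,L) = Q(x,L) × (t - L^p, t + L^p)`. -/
def pRect (n : ℕ) (p : ℝ) (x : Fin n → ℝ) (t L : ℝ) : Set ((Fin n → ℝ) × ℝ) :=
  (spCube n x L) ×ˢ (Set.Ioo (t - L ^ p) (t + L ^ p))

/-- The upper part `R^+(γ) = Q(x,L) × (t + γL^p, t + L^p)` of the parabolic rectangle. -/
def pRectPlus (n : ℕ) (p : ℝ) (x : Fin n → ℝ) (t L γ : ℝ) : Set ((Fin n → ℝ) × ℝ) :=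
  (spCube n x L) ×ˢ (Set.Ioo (t + γ * L ^ p) (t + L ^ p))

/-- The lower part `R^-(γ) = Q(x,L) × (t - L^p, t - γL^p)` of the parabolic rectangle. -/
def pRectMinus (n : ℕ) (p : ℝ) (x : Fin n → ℝ) (t L γ : ℝ) : Set ((Fin n → ℝ) × ℝ) :=
  (spCube n x L) ×ˢ (Set.Ioo (t - L ^ p) (t - γ * L ^ p))

/-- The time translate `A + (0,s) = {(y, r + s) : (y,r) ∈ A}`. -/
def tAdd (n : ℕ) (A : Set ((Fin n → ℝ) × ℝ)) (s : ℝ) : Set ((Fin n → ℝ) × ℝ) :=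
  {z | (z.1, z.2 - s) ∈ A}

/-- A weight: a nonnegative (`ℝ≥0∞`-valued) a.e. measurable, locally integrable function. -/
def IsWeight (n : ℕ) (w : (Fin n → ℝ) × ℝ → ℝ≥0∞) : Prop :=
  AEMeasurable w (volume : Measure ((Fin n → ℝ) × ℝ)) ∧
    ∀ K : Set ((Fin n → ℝ) × ℝ), IsCompact K → ∫⁻ z in K, w z ∂volume < ⊤

/-- `C` is an admissible constant in the parabolic Muckenhoupt `A_q^+(γ)` condition (`1 < q`). -/
def IsAqPlusConst (n : ℕ) (p q γ : ℝ) (w : (Fin n → ℝ) × ℝ → ℝ≥0∞) (C : ℝ≥0∞) : Prop :=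
  ∀ (x : Fin n → ℝ) (t L : ℝ), 0 < L →
    (⨍⁻ z in pRectMinus n p x t L γ, w z ∂volume) *
      (⨍⁻ z in pRectPlus n p x t L γ, w z ^ (1 / (1 - q)) ∂volume) ^ (q - 1) ≤ C

/-- `C` is an admissible constant in the parabolic Muckenhoupt `A_q^-(γ)` condition (`1 < q`),
i.e. the condition with the time direction reversed. -/
def IsAqMinusConst (n : ℕ) (p q γ : ℝ) (w : (Fin n → ℝ) × ℝ → ℝ≥0∞) (C : ℝ≥0∞) : Prop :=
  ∀ (x : Fin n → ℝ) (t L : ℝ), 0 < L →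
    (⨍⁻ z in pRectPlus n p x t L γ, w z ∂volume) *
      (⨍⁻ z in pRectMinus n p x t L γ, w z ^ (1 / (1 - q)) ∂volume) ^ (q - 1) ≤ C

/-- The parabolic Muckenhoupt class `A_q^+(γ)` for `1 < q`. -/
def MemAqPlus (n : ℕ) (p q γ : ℝ) (w : (Fin n → ℝ) × ℝ → ℝ≥0∞) : Prop :=
  ∃ C : ℝ≥0∞, C ≠ ⊤ ∧ IsAqPlusConst n p q γ w C

/-- The parabolic Muckenhoupt class `A_q^-(γ)` for `1 < q`. -/
def MemAqMinus (n : ℕ) (p q γ : ℝ) (w : (Fin n → ℝ) × ℝ → ℝ≥0∞) : Prop :=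
  ∃ C : ℝ≥0∞, C ≠ ⊤ ∧ IsAqMinusConst n p q γ w C

/-- `C` is an admissible constant in the parabolic Muckenhoupt `A_1^+(γ)` condition. -/
def IsA1PlusConst (n : ℕ) (p γ : ℝ) (w : (Fin n → ℝ) × ℝ → ℝ≥0∞) (C : ℝ≥0∞) : Prop :=
  ∀ (x : Fin n → ℝ) (t L : ℝ), 0 < L →
    (⨍⁻ z in pRectMinus n p x t L γ, w z ∂volume) ≤
      C * essInf w (volume.restrict (pRectPlus n p x t L γ))

/-- `C` is an admissible constant in the parabolic Muckenhoupt `A_1^-(γ)` condition. -/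
def IsA1MinusConst (n : ℕ) (p γ : ℝ) (w : (Fin n → ℝ) × ℝ → ℝ≥0∞) (C : ℝ≥0∞) : Prop :=
  ∀ (x : Fin n → ℝ) (t L : ℝ), 0 < L →
    (⨍⁻ z in pRectPlus n p x t L γ, w z ∂volume) ≤
      C * essInf w (volume.restrict (pRectMinus n p x t L γ))

/-- The parabolic Muckenhoupt class `A_1^+(γ)`. -/
def MemA1Plus (n : ℕ) (p γ : ℝ) (w : (Fin n → ℝ) × ℝ → ℝ≥0∞) : Prop :=
  ∃ C : ℝ≥0∞, 0 < C ∧ C ≠ ⊤ ∧ IsA1PlusConst n p γ w C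

/-- The parabolic Muckenhoupt class `A_1^-(γ)`. -/
def MemA1Minus (n : ℕ) (p γ : ℝ) (w : (Fin n → ℝ) × ℝ → ℝ≥0∞) : Prop :=
  ∃ C : ℝ≥0∞, 0 < C ∧ C ≠ ⊤ ∧ IsA1MinusConst n p γ w C

/-- Unified admissible `A_q^+(γ)` constant for `1 ≤ q < ∞`. -/
def IsAPlusConst (n : ℕ) (p q γ : ℝ) (w : (Fin n → ℝ) × ℝ → ℝ≥0∞) (C : ℝ≥0∞) : Prop :=
  if q = 1 then IsA1PlusConst n p γ w C else IsAqPlusConst n p q γ w C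

/-- Unified parabolic Muckenhoupt class `A_q^+(γ)` for `1 ≤ q < ∞`. -/
def MemAPlus (n : ℕ) (p q γ : ℝ) (w : (Fin n → ℝ) × ℝ → ℝ≥0∞) : Prop :=
  ∃ C : ℝ≥0∞, C ≠ ⊤ ∧ IsAPlusConst n p q γ w C

/-- The uncentered forward-in-time parabolic maximal function `M^{γ+}g`. -/
def MaxPlus (n : ℕ) (p γ : ℝ) (g : (Fin n → ℝ) × ℝ → ℝ≥0∞) (z : (Fin n → ℝ) × ℝ) : ℝ≥0∞ :=
  ⨆ (x : Fin n → ℝ) (t : ℝ) (L : ℝ) (_ : 0 < L) (_ : z ∈ pRectMinus n p x t L γ),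
    ⨍⁻ y in pRectPlus n p x t L γ, g y ∂volume

/-- The uncentered backward-in-time parabolic maximal function `M^{γ-}g`. -/
def MaxMinus (n : ℕ) (p γ : ℝ) (g : (Fin n → ℝ) × ℝ → ℝ≥0∞) (z : (Fin n → ℝ) × ℝ) : ℝ≥0∞ :=
  ⨆ (x : Fin n → ℝ) (t : ℝ) (L : ℝ) (_ : 0 < L) (_ : z ∈ pRectPlus n p x t L γ),
    ⨍⁻ y in pRectMinus n p x t L γ, g y ∂volume

/-- The qualitative measure condition with parameters `(γ, α, β)`:
for every parabolic rectangle `R` and every measurable `E ⊆ R^+(γ)` with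
`w(E) < β·w(R^-(γ))` one has `|E| < α·|R^+(γ)|`. -/
def QualMeasCond (n : ℕ) (p γ α β : ℝ) (w : (Fin n → ℝ) × ℝ → ℝ≥0∞) : Prop :=
  ∀ (x : Fin n → ℝ) (t L : ℝ), 0 < L →
    ∀ E : Set ((Fin n → ℝ) × ℝ), E ⊆ pRectPlus n p x t L γ → MeasurableSet E →
      (∫⁻ z in E, w z ∂volume) <
          ENNReal.ofReal β * ∫⁻ z in pRectMinus n p x t L γ, w z ∂volume →
        volume E < ENNReal.ofReal α * volume (pRectPlus n p x t L γ)

end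

/-!
If `w ∈ A_1^+(γ)` with constant `C`, then for a.e. `z` the value `w z` dominates the essential
infimum of `w` over every open set containing `z` (a countable basis of the topology makes the
exceptional set null). Given a rectangle `R` with `z ∈ R^+(γ)`, slightly enlarging its side length
and shifting it in time yields `R'` with `R^-(γ) ⊆ R'^-(γ)` and `z` in the interior of `R'^+(γ)`, so
`∫_{R^-} w ≤ C w(z) |R'^-|`; letting `R'` shrink back to `R` gives `⨍_{R^-} w ≤ C w(z)`.
Conversely, `⨍_{R^-} w ≤ M^{γ-} w ≤ C w` a.e. on `R^+(γ)`, which bounds the essential infimum.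
-/

open Filter Topology

theorem ae_forall_isOpen_essInf_restrict_le {X β : Type*} [TopologicalSpace X]
    [SecondCountableTopology X] [MeasurableSpace X] [OpensMeasurableSpace X]
    [CompleteLinearOrder β] [TopologicalSpace β] [FirstCountableTopology β] [OrderTopology β]
    (μ : Measure X) (f : X → β) :
    ∀ᵐ x ∂μ, ∀ U, IsOpen U → x ∈ U → essInf f (μ.restrict U) ≤ f x := by
  obtain ⟨B, hBc, -, hB⟩ := TopologicalSpace.exists_countable_basis X
  have hbasis : ∀ᵐ x ∂μ, ∀ b ∈ B, x ∈ b → essInf f (μ.restrict b) ≤ f x :=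
    (ae_ball_iff hBc).2 fun b hb =>
      (ae_restrict_iff' (hB.isOpen hb).measurableSet).1 ae_essInf_le
  filter_upwards [hbasis] with x hx U hU hxU
  obtain ⟨b, hb, hxb, hbU⟩ := hB.exists_subset_of_mem_open hxU hU
  exact (essInf_antitone_measure
    (Measure.absolutelyContinuous_of_le (Measure.restrict_mono hbU le_rfl))).trans (hx b hb hxb)

section ParabolicRectangles

variable {n : ℕ} {p γ : ℝ} {x : Fin n → ℝ} {t L : ℝ}

theorem spCube_eq_closedBall (hL : 0 ≤ L) : spCube n x L = Metric.closedBall x L := by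
  ext y
  simp only [spCube, mem_ofPred_eq, Metric.mem_closedBall, dist_pi_le_iff hL, Real.dist_eq]

theorem ball_subset_spCube : Metric.ball x L ⊆ spCube n x L := fun y hy i =>
  (Real.dist_eq _ _ ▸ dist_le_pi_dist y x i).trans (Metric.mem_ball.1 hy).le

theorem spCube_mono {L' : ℝ} (h : L ≤ L') : spCube n x L ⊆ spCube n x L' :=
  fun _ hy i => (hy i).trans h

theorem isClosed_spCube : IsClosed (spCube n x L) := by
  simp only [spCube, ofPred_forall]
  exact isClosed_iInter fun i => isClosed_le (by fun_prop) continuous_const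

theorem measurableSet_pRectPlus : MeasurableSet (pRectPlus n p x t L γ) :=
  isClosed_spCube.measurableSet.prod measurableSet_Ioo

theorem ball_prod_Ioo_subset_interior_pRectPlus :
    Metric.ball x L ×ˢ Ioo (t + γ * L ^ p) (t + L ^ p) ⊆ interior (pRectPlus n p x t L γ) :=
  interior_maximal (prod_mono ball_subset_spCube subset_rfl) (Metric.isOpen_ball.prod isOpen_Ioo)

theorem volume_pRectMinus (hL : 0 ≤ L) :
    volume (pRectMinus n p x t L γ) = ENNReal.ofReal ((2 * L) ^ n * ((1 - γ) * L ^ p)) := by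
  rw [pRectMinus, Measure.volume_eq_prod, Measure.prod_prod, spCube_eq_closedBall hL,
    Real.volume_pi_closedBall x hL, Real.volume_Ioo, Fintype.card_fin,
    ← ENNReal.ofReal_mul (by positivity)]
  ring_nf

theorem volume_pRectMinus_ne_zero (hL : 0 < L) (hγ : γ < 1) :
    volume (pRectMinus n p x t L γ) ≠ 0 := by
  rw [volume_pRectMinus hL.le, ne_eq, ENNReal.ofReal_eq_zero, not_le]
  have := Real.rpow_pos_of_pos hL p
  have : 0 < 1 - γ := by linarith
  positivity

theorem tendsto_volume_pRectMinus (hp : 0 < p) (hL : 0 < L) (t' : ℝ → ℝ) :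
    Tendsto (fun L' => volume (pRectMinus n p x (t' L') L' γ)) (𝓝 L)
      (𝓝 (volume (pRectMinus n p x t L γ))) := by
  have hrpow := Real.continuousAt_rpow_const L p (Or.inr hp.le)
  have hcont : ContinuousAt (fun L' : ℝ => (2 * L') ^ n * ((1 - γ) * L' ^ p)) L := by fun_prop
  rw [volume_pRectMinus hL.le]
  refine Tendsto.congr' ?_ (ENNReal.tendsto_ofReal hcont.tendsto)
  filter_upwards [lt_mem_nhds hL] with L' hL'
  rw [volume_pRectMinus hL'.le]

/-- The time shift `γ (L'^p - L^p)` keeps the top `t - γ L^p` of the lower part fixed. -/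
theorem eventually_pRectMinus_subset_and_mem_interior_pRectPlus {z : (Fin n → ℝ) × ℝ}
    (hp : 0 < p) (hγ0 : 0 ≤ γ) (hγ1 : γ ≤ 1) (hL : 0 ≤ L) (hz : z ∈ pRectPlus n p x t L γ) :
    ∀ᶠ L' in 𝓝[>] L,
      pRectMinus n p x t L γ ⊆ pRectMinus n p x (t + γ * (L' ^ p - L ^ p)) L' γ ∧
      z ∈ interior (pRectPlus n p x (t + γ * (L' ^ p - L ^ p)) L' γ) := by
  obtain ⟨hzQ, hzlow, hzup⟩ := hz
  have hlow : ∀ᶠ L' in 𝓝[>] L, t + γ * L ^ p + 2 * γ * (L' ^ p - L ^ p) < z.2 := by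
    have hcont : ContinuousAt (fun L' => t + γ * L ^ p + 2 * γ * (L' ^ p - L ^ p)) L := by
      have := Real.continuousAt_rpow_const L p (Or.inr hp.le)
      fun_prop
    refine nhdsWithin_le_nhds (hcont.eventually (gt_mem_nhds ?_))
    simpa using hzlow
  filter_upwards [self_mem_nhdsWithin, hlow] with L' hLL' hlow'
  have ha : 0 ≤ L' ^ p - L ^ p := sub_nonneg.2 (Real.rpow_le_rpow hL hLL'.le hp.le)
  refine ⟨prod_mono (spCube_mono hLL'.le) (Ioo_subset_Ioo (by nlinarith) (by linarith)),
    ball_prod_Ioo_subset_interior_pRectPlus ⟨?_, ?_, ?_⟩⟩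
  · rw [spCube_eq_closedBall hL] at hzQ
    exact Metric.mem_ball.2 (lt_of_le_of_lt hzQ hLL')
  · linarith
  · nlinarith

theorem setLAverage_pRectMinus_le_maxMinus {z : (Fin n → ℝ) × ℝ} (g : (Fin n → ℝ) × ℝ → ℝ≥0∞)
    (hL : 0 < L) (hz : z ∈ pRectPlus n p x t L γ) :
    ⨍⁻ y in pRectMinus n p x t L γ, g y ∂volume ≤ MaxMinus n p γ g z :=
  le_iSup_of_le x <| le_iSup_of_le t <| le_iSup_of_le L <| le_iSup₂_of_le hL hz le_rfl

end ParabolicRectangles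

section MaximalFunction

variable {n : ℕ} {p γ : ℝ} {w : (Fin n → ℝ) × ℝ → ℝ≥0∞} {C : ℝ≥0∞}

theorem ae_maxMinus_le_of_isA1PlusConst (hp : 0 < p) (hγ0 : 0 ≤ γ) (hγ1 : γ < 1)
    (hC : IsA1PlusConst n p γ w C) :
    ∀ᵐ z ∂(volume : Measure ((Fin n → ℝ) × ℝ)), MaxMinus n p γ w z ≤ C * w z := by
  filter_upwards [ae_forall_isOpen_essInf_restrict_le volume w] with z hz
  simp only [MaxMinus, iSup_le_iff]
  intro x t L hL hzR
  rw [setLAverage_eq]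
  refine ENNReal.div_le_of_le_mul ?_
  have henlarge : ∀ᶠ L' in 𝓝[>] L, ∫⁻ y in pRectMinus n p x t L γ, w y ∂volume ≤
      C * w z * volume (pRectMinus n p x (t + γ * (L' ^ p - L ^ p)) L' γ) := by
    filter_upwards [eventually_pRectMinus_subset_and_mem_interior_pRectPlus hp hγ0 hγ1.le hL.le
      hzR, self_mem_nhdsWithin] with L' ⟨hsub, hzint⟩ hLL'
    set t' := t + γ * (L' ^ p - L ^ p)
    have hess : essInf w (volume.restrict (pRectPlus n p x t' L' γ)) ≤ w z :=
      (essInf_antitone_measure (Measure.absolutelyContinuous_of_le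
        (Measure.restrict_mono interior_subset le_rfl))).trans (hz _ isOpen_interior hzint)
    calc ∫⁻ y in pRectMinus n p x t L γ, w y ∂volume
        ≤ ∫⁻ y in pRectMinus n p x t' L' γ, w y ∂volume := lintegral_mono_set hsub
      _ = volume (pRectMinus n p x t' L' γ) * ⨍⁻ y in pRectMinus n p x t' L' γ, w y ∂volume :=
        (measure_mul_setLAverage _ (by rw [volume_pRectMinus (hL.trans hLL').le]; simp)).symm
      _ ≤ volume (pRectMinus n p x t' L' γ) * (C * w z) :=
        mul_le_mul_right ((hC x t' L' (hL.trans hLL')).trans (mul_le_mul_right hess C)) _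
      _ = C * w z * volume (pRectMinus n p x t' L' γ) := mul_comm _ _
  exact ge_of_tendsto (ENNReal.Tendsto.const_mul
    ((tendsto_volume_pRectMinus hp hL _).mono_left nhdsWithin_le_nhds)
    (Or.inl (volume_pRectMinus_ne_zero hL hγ1))) henlarge

theorem isA1PlusConst_of_ae_maxMinus_le (hC0 : C ≠ 0) (hCtop : C ≠ ⊤)
    (hmax : ∀ᵐ z ∂(volume : Measure ((Fin n → ℝ) × ℝ)), MaxMinus n p γ w z ≤ C * w z) :
    IsA1PlusConst n p γ w C := by
  intro x t L hL
  have hae : ∀ᵐ z ∂(volume.restrict (pRectPlus n p x t L γ)),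
      C⁻¹ * ⨍⁻ y in pRectMinus n p x t L γ, w y ∂volume ≤ w z := by
    filter_upwards [ae_restrict_mem measurableSet_pRectPlus, ae_restrict_of_ae hmax]
      with z hzR hz
    exact (ENNReal.inv_mul_le_iff hC0 hCtop).2
      ((setLAverage_pRectMinus_le_maxMinus w hL hzR).trans hz)
  exact (ENNReal.inv_mul_le_iff hC0 hCtop).1 (le_essInf_of_ae_le _ hae)

end MaximalFunction

theorem statement0_general (n : ℕ) (p : ℝ) (hp : 1 < p) (γ : ℝ)
    (hγ0 : 0 ≤ γ) (hγ1 : γ < 1)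
    (w : (Fin n → ℝ) × ℝ → ℝ≥0∞) :
    (MemA1Plus n p γ w ↔
      ∃ C : ℝ≥0∞, 0 < C ∧ C ≠ ⊤ ∧
        ∀ᵐ z ∂(volume : Measure ((Fin n → ℝ) × ℝ)), MaxMinus n p γ w z ≤ C * w z) ∧
    ∀ C : ℝ≥0∞, IsA1PlusConst n p γ w C →
      ∀ᵐ z ∂(volume : Measure ((Fin n → ℝ) × ℝ)), MaxMinus n p γ w z ≤ C * w z := by
  have hmax (C : ℝ≥0∞) (hC : IsA1PlusConst n p γ w C) :=
    ae_maxMinus_le_of_isA1PlusConst (zero_lt_one.trans hp) hγ0 hγ1 hC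
  refine ⟨⟨fun ⟨C, hC0, hCtop, hC⟩ => ⟨C, hC0, hCtop, hmax C hC⟩, fun ⟨C, hC0, hCtop, hC⟩ =>
    ⟨C, hC0, hCtop, isA1PlusConst_of_ae_maxMinus_le hC0.ne' hCtop hC⟩⟩, hmax⟩

/-- Let `0 ≤ γ < 1` and let `w` be a weight on `ℝ^{n+1}`. Then
`w ∈ A_1^+(γ)` if and only if there is a constant `C > 0` with
`M^{γ-}w ≤ C·w` almost everywhere; moreover, any admissible `A_1^+(γ)` constant `C`
for `w` (in particular `C = [w]_{A_1^+(γ)}`) works in the pointwise bound. -/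
theorem statement0 (n : ℕ) (hn : 1 ≤ n) (p : ℝ) (hp : 1 < p) (γ : ℝ)
    (hγ0 : 0 ≤ γ) (hγ1 : γ < 1)
    (w : (Fin n → ℝ) × ℝ → ℝ≥0∞) (hw : IsWeight n w) :
    (MemA1Plus n p γ w ↔
      ∃ C : ℝ≥0∞, 0 < C ∧ C ≠ ⊤ ∧
        ∀ᵐ z ∂(volume : Measure ((Fin n → ℝ) × ℝ)), MaxMinus n p γ w z ≤ C * w z) ∧
    ∀ C : ℝ≥0∞, IsA1PlusConst n p γ w C →
      ∀ᵐ z ∂(volume : Measure ((Fin n → ℝ) × ℝ)), MaxMinus n p γ w z ≤ C * w z :=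
  statement0_general n p hp γ hγ0 hγ1 w
end

section
/- Let 0 < γ, α, β < 1 and let w be a weight satisfying the qualitative measure condition with parameters (γ, α, β). Then for every θ > 0 there is a constant C ≥ 1 depending only on p, γ, β and θ such that w(R^−(γ)) ≤ C · w(R^−(γ) + (0, ωL^p)) for every parabolic rectangle R of side length L and every 0 ≤ ω ≤ θ. -/
open MeasureTheory ENNReal Set

noncomputable section Aux

namespace St6

lemma spCube_eq (n : ℕ) (x : Fin n → ℝ) (L : ℝ) :
    spCube n x L = Set.pi Set.univ (fun i => Icc (x i - L) (x i + L)) := by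
  ext y
  simp only [spCube, mem_setOf_eq, Set.mem_pi, Set.mem_univ, forall_true_left, mem_Icc]
  constructor <;> intro h i <;> have := h i <;> rw [abs_sub_le_iff] at * <;>
    constructor <;> linarith [this.1, this.2]

lemma measSpCube (n : ℕ) (x : Fin n → ℝ) (L : ℝ) : MeasurableSet (spCube n x L) := by
  rw [spCube_eq]; exact MeasurableSet.univ_pi (fun i => measurableSet_Icc)

lemma volSpCube (n : ℕ) (x : Fin n → ℝ) (L : ℝ) :
    volume (spCube n x L) = (ENNReal.ofReal (2 * L)) ^ n := by
  rw [spCube_eq, volume_pi_pi]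
  simp [Real.volume_Icc]
  congr 1; ring_nf; rw [ENNReal.ofReal_mul' (by norm_num), ENNReal.ofReal_ofNat]

lemma measMinus (n : ℕ) (p : ℝ) (x : Fin n → ℝ) (t L γ : ℝ) :
    MeasurableSet (pRectMinus n p x t L γ) :=
  (measSpCube n x L).prod measurableSet_Ioo

lemma measPlus (n : ℕ) (p : ℝ) (x : Fin n → ℝ) (t L γ : ℝ) :
    MeasurableSet (pRectPlus n p x t L γ) :=
  (measSpCube n x L).prod measurableSet_Ioo

lemma volProd (s : Set (Fin n → ℝ)) (t : Set ℝ) :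
    volume (s ×ˢ t) = volume s * volume t := by
  rw [MeasureTheory.Measure.volume_eq_prod]; exact Measure.prod_prod ..

lemma volPlus (n : ℕ) (p : ℝ) (x : Fin n → ℝ) (t L γ : ℝ) :
    volume (pRectPlus n p x t L γ)
      = (ENNReal.ofReal (2 * L)) ^ n * ENNReal.ofReal ((1 - γ) * L ^ p) := by
  rw [pRectPlus, volProd, volSpCube, Real.volume_Ioo]
  congr 1; ring

end St6
end Aux
noncomputable section Base
namespace St6
variable {n : ℕ} {p γ α β : ℝ} {w : (Fin n → ℝ) × ℝ → ℝ≥0∞}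

/-- abbreviation for the weighted measure -/
def mw (n : ℕ) (w : (Fin n → ℝ) × ℝ → ℝ≥0∞) : Measure ((Fin n → ℝ) × ℝ) :=
  (volume : Measure ((Fin n → ℝ) × ℝ)).withDensity w

lemma mw_apply {E : Set ((Fin n → ℝ) × ℝ)} (hE : MeasurableSet E) :
    mw n w E = ∫⁻ z in E, w z ∂volume := withDensity_apply w hE

lemma mw_null {E : Set ((Fin n → ℝ) × ℝ)} (hE : volume E = 0) : mw n w E = 0 :=
  (withDensity_absolutelyContinuous _ _) hE

lemma base (hp : 1 < p) (hγ1 : γ < 1) (hα0 : 0 < α) (hα1 : α < 1) (hβ1 : β < 1)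
    (hqmc : QualMeasCond n p γ α β w)
    (x : Fin n → ℝ) (t L : ℝ) (hL : 0 < L) :
    ENNReal.ofReal β * mw n w (pRectMinus n p x t L γ)
      ≤ mw n w (pRectPlus n p x t L γ) := by
  by_contra hcon
  push_neg at hcon
  rw [mw_apply (measPlus ..), mw_apply (measMinus ..)] at hcon
  have h := hqmc x t L hL (pRectPlus n p x t L γ) subset_rfl (measPlus ..) hcon
  have hLp : 0 < L ^ p := Real.rpow_pos_of_pos hL p
  have hV : volume (pRectPlus n p x t L γ)
      = (ENNReal.ofReal (2 * L)) ^ n * ENNReal.ofReal ((1 - γ) * L ^ p) := volPlus ..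
  have hle : ENNReal.ofReal α * volume (pRectPlus n p x t L γ)
      ≤ volume (pRectPlus n p x t L γ) := by
    calc ENNReal.ofReal α * volume (pRectPlus n p x t L γ)
        ≤ 1 * volume (pRectPlus n p x t L γ) := by
          apply mul_le_mul_left
          rw [ENNReal.ofReal_le_one]; linarith
      _ = _ := one_mul _
  exact absurd (lt_of_lt_of_le h hle) (lt_irrefl _)

/-- plus part is a shifted minus part -/
lemma plus_eq_minus (n : ℕ) (p : ℝ) (x : Fin n → ℝ) (t L γ : ℝ) :
    pRectPlus n p x t L γ = pRectMinus n p x (t + (1 + γ) * L ^ p) L γ := by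
  rw [pRectPlus, pRectMinus]
  congr 1 <;> ring

lemma tAdd_minus (n : ℕ) (p : ℝ) (x : Fin n → ℝ) (t L γ s : ℝ) :
    tAdd n (pRectMinus n p x t L γ) s = pRectMinus n p x (t + s) L γ := by
  ext z
  simp only [tAdd, pRectMinus, mem_setOf_eq, Set.mem_prod, mem_Ioo]
  constructor <;> rintro ⟨h1, h2, h3⟩ <;> exact ⟨h1, by linarith, by linarith⟩

lemma chain (hp : 1 < p) (hγ1 : γ < 1) (hα0 : 0 < α) (hα1 : α < 1) (hβ1 : β < 1)
    (hqmc : QualMeasCond n p γ α β w)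
    (x : Fin n → ℝ) (L : ℝ) (hL : 0 < L) (k : ℕ) (t : ℝ) :
    (ENNReal.ofReal β) ^ k * mw n w (pRectMinus n p x t L γ)
      ≤ mw n w (pRectMinus n p x (t + k * ((1 + γ) * L ^ p)) L γ) := by
  induction k generalizing t with
  | zero => simp
  | succ k ih =>
    have h1 : ENNReal.ofReal β * mw n w (pRectMinus n p x t L γ)
        ≤ mw n w (pRectMinus n p x (t + (1 + γ) * L ^ p) L γ) := by
      rw [← plus_eq_minus]; exact base hp hγ1 hα0 hα1 hβ1 hqmc x t L hL
    calc (ENNReal.ofReal β) ^ (k+1) * mw n w (pRectMinus n p x t L γ)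
        = (ENNReal.ofReal β) ^ k *
            (ENNReal.ofReal β * mw n w (pRectMinus n p x t L γ)) := by ring
      _ ≤ (ENNReal.ofReal β) ^ k *
            mw n w (pRectMinus n p x (t + (1 + γ) * L ^ p) L γ) := by
          exact mul_le_mul_right h1 _
      _ ≤ mw n w (pRectMinus n p x (t + (1 + γ) * L ^ p + k * ((1 + γ) * L ^ p)) L γ) :=
          ih _
      _ = _ := by congr 2; push_cast; ring

lemma chain' (hp : 1 < p) (hγ1 : γ < 1) (hα0 : 0 < α) (hα1 : α < 1)
    (hβ0 : 0 < β) (hβ1 : β < 1)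
    (hqmc : QualMeasCond n p γ α β w)
    (x : Fin n → ℝ) (L : ℝ) (hL : 0 < L) (k : ℕ) (t : ℝ) :
    mw n w (pRectMinus n p x t L γ)
      ≤ (ENNReal.ofReal β)⁻¹ ^ k *
          mw n w (pRectMinus n p x (t + k * ((1 + γ) * L ^ p)) L γ) := by
  have hb0 : (ENNReal.ofReal β) ^ k ≠ 0 := by
    apply pow_ne_zero; simp [ENNReal.ofReal_eq_zero]; linarith
  have hbt : (ENNReal.ofReal β) ^ k ≠ ⊤ := by
    apply pow_ne_top; exact ofReal_ne_top
  calc mw n w (pRectMinus n p x t L γ)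
      = (ENNReal.ofReal β)⁻¹ ^ k *
          ((ENNReal.ofReal β) ^ k * mw n w (pRectMinus n p x t L γ)) := by
        rw [← mul_assoc, ← ENNReal.inv_pow, ENNReal.inv_mul_cancel hb0 hbt, one_mul]
    _ ≤ _ := mul_le_mul_right (chain hp hγ1 hα0 hα1 hβ1 hqmc x L hL k t) _

end St6
end Base
noncomputable section Tiles
namespace St6
variable {n m : ℕ} {x : Fin n → ℝ} {L : ℝ}

/-- centers of the subdivision of `Q(x,L)` into `m^n` subcubes of side `L/m` -/
def ctr (x : Fin n → ℝ) (L : ℝ) (m : ℕ) (j : Fin n → Fin m) : Fin n → ℝ :=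
  fun i => x i - L + L/m + 2*(L/m)*(j i)

/-- half-open version of the subcube -/
def tileO (x : Fin n → ℝ) (L : ℝ) (m : ℕ) (j : Fin n → Fin m) : Set (Fin n → ℝ) :=
  Set.pi Set.univ fun i => Ico (x i - L + 2*(L/m)*(j i)) (x i - L + 2*(L/m)*(j i) + 2*(L/m))

lemma tile_eq (j : Fin n → Fin m) :
    spCube n (ctr x L m j) (L/m) =
      Set.pi Set.univ fun i =>
        Icc (x i - L + 2*(L/m)*(j i)) (x i - L + 2*(L/m)*(j i) + 2*(L/m)) := by
  have hfun : (fun i => Icc (ctr x L m j i - L/m) (ctr x L m j i + L/m))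
      = fun i : Fin n =>
        Icc (x i - L + 2*(L/m)*(j i)) (x i - L + 2*(L/m)*(j i) + 2*(L/m)) := by
    funext i
    have e1 : ctr x L m j i - L/m = x i - L + 2*(L/m)*(j i) := by simp only [ctr]; ring
    have e2 : ctr x L m j i + L/m = x i - L + 2*(L/m)*(j i) + 2*(L/m) := by
      simp only [ctr]; ring
    rw [e1, e2]
  rw [spCube_eq, hfun]

lemma tileO_subset (j : Fin n → Fin m) : tileO x L m j ⊆ spCube n (ctr x L m j) (L/m) := by
  rw [tile_eq]
  exact Set.pi_mono fun i _ => Ico_subset_Icc_self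

lemma tile_subset (hL : 0 < L) (hm : 0 < m) (j : Fin n → Fin m) :
    spCube n (ctr x L m j) (L/m) ⊆ spCube n x L := by
  rw [tile_eq, spCube_eq]
  apply Set.pi_mono
  intro i _
  have hm' : (1 : ℝ) ≤ m := by exact_mod_cast hm
  have hji : (0:ℝ) ≤ (j i : ℝ) := by positivity
  have hji2 : (j i : ℝ) + 1 ≤ m := by
    have := j i |>.is_lt
    exact_mod_cast this
  have hl : 0 < L/m := by positivity
  have hLm : (L/(m:ℝ))*(m:ℝ) = L := by field_simp
  have h2 : (L/(m:ℝ))*((j i : ℝ)+1) ≤ (L/(m:ℝ))*(m:ℝ) :=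
    mul_le_mul_of_nonneg_left hji2 (le_of_lt hl)
  apply Icc_subset_Icc <;> nlinarith

lemma tile_cover (hL : 0 < L) (hm : 0 < m) :
    spCube n x L ⊆ ⋃ j : Fin n → Fin m, spCube n (ctr x L m j) (L/m) := by
  intro y hy
  rw [spCube_eq] at hy
  simp only [Set.mem_pi, Set.mem_univ, forall_true_left, mem_Icc] at hy
  have hl : 0 < L/m := by positivity
  set q : Fin n → Fin m := fun i =>
    ⟨min ⌊(y i - (x i - L))/(2*(L/m))⌋₊ (m-1), by
      have : m - 1 < m := Nat.sub_lt hm one_pos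
      exact lt_of_le_of_lt (min_le_right _ _) this⟩ with hq
  refine Set.mem_iUnion.2 ⟨q, ?_⟩
  rw [tile_eq]
  simp only [Set.mem_pi, Set.mem_univ, forall_true_left, mem_Icc]
  intro i
  have h1 := (hy i).1
  have h2 := (hy i).2
  set u := y i - (x i - L) with hu
  have hu0 : 0 ≤ u := by simp [hu]; linarith
  have hu2 : u ≤ 2*(L/m)*m := by
    have : (L/m)*m = L := by field_simp
    simp [hu]; nlinarith
  have h2l : 0 < 2*(L/m) := by linarith
  have key : 2*(L/m)*(q i : ℝ) ≤ u ∧ u ≤ 2*(L/m)*((q i : ℝ)+1) := by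
    rcases le_or_gt ⌊u/(2*(L/m))⌋₊ (m-1) with hc | hc
    · have hqi : (q i : ℕ) = ⌊u/(2*(L/m))⌋₊ := by simp [hq, ← hu, min_eq_left hc]
      constructor
      · have := Nat.floor_le (by positivity : 0 ≤ u/(2*(L/m)))
        rw [hqi]
        calc 2*(L/m)*(⌊u/(2*(L/m))⌋₊ : ℝ) ≤ 2*(L/m)*(u/(2*(L/m))) := by nlinarith
          _ = u := by field_simp
      · have := Nat.lt_floor_add_one (u/(2*(L/m)))
        rw [hqi]
        have : u/(2*(L/m)) ≤ (⌊u/(2*(L/m))⌋₊ : ℝ) + 1 := le_of_lt this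
        calc u = 2*(L/m)*(u/(2*(L/m))) := by field_simp
          _ ≤ 2*(L/m)*((⌊u/(2*(L/m))⌋₊ : ℝ)+1) := by nlinarith
    · have hqi : (q i : ℕ) = m - 1 := by simp [hq, ← hu, min_eq_right (le_of_lt hc)]
      have hm1 : ((m-1 : ℕ) : ℝ) = (m : ℝ) - 1 := by
        have : (1:ℕ) ≤ m := hm
        push_cast [Nat.cast_sub this]; ring
      constructor
      · have hfl : (m : ℝ) ≤ u/(2*(L/m)) := by
          have : (m : ℕ) ≤ ⌊u/(2*(L/m))⌋₊ := by omega
          calc (m : ℝ) ≤ (⌊u/(2*(L/m))⌋₊ : ℝ) := by exact_mod_cast this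
            _ ≤ u/(2*(L/m)) := Nat.floor_le (by positivity)
        rw [hqi, hm1]
        have : 2*(L/m)*(m : ℝ) ≤ u := by
          calc 2*(L/m)*(m:ℝ) = 2*(L/m)*(m:ℝ) := rfl
            _ ≤ 2*(L/m)*(u/(2*(L/m))) := by nlinarith
            _ = u := by field_simp
        nlinarith
      · rw [hqi, hm1]
        have : (m:ℝ) - 1 + 1 = m := by ring
        rw [this]; exact hu2
  constructor <;> [skip; skip] <;> simp [hu] at key ⊢ <;> linarith [key.1, key.2]

lemma tileO_disjoint (hL : 0 < L) (hm : 0 < m) :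
    Set.univ.PairwiseDisjoint (fun j : Fin n → Fin m => tileO x L m j) := by
  intro j _ j' _ hjj'
  refine Set.disjoint_left.2 fun y hy hy' => hjj' ?_
  funext i
  simp only [tileO, Set.mem_pi, Set.mem_univ, forall_true_left, mem_Ico] at hy hy'
  have h1 := hy i; have h2 := hy' i
  have hl : 0 < L/m := by positivity
  by_contra hne
  rcases Fin.lt_or_lt_of_ne hne with hlt | hlt
  · have : ((j i : ℕ) : ℝ) + 1 ≤ ((j' i : ℕ) : ℝ) := by exact_mod_cast hlt
    nlinarith [h1.1, h1.2, h2.1, h2.2]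
  · have : ((j' i : ℕ) : ℝ) + 1 ≤ ((j i : ℕ) : ℝ) := by exact_mod_cast hlt
    nlinarith [h1.1, h1.2, h2.1, h2.2]

lemma measTileO (j : Fin n → Fin m) : MeasurableSet (tileO x L m j) :=
  MeasurableSet.univ_pi fun i => measurableSet_Ico

lemma vol_tile_diff (hL : 0 < L) (hm : 0 < m) (j : Fin n → Fin m) :
    volume (spCube n (ctr x L m j) (L/m) \ tileO x L m j) = 0 := by
  have hl : 0 < L/m := by positivity
  have hvO : volume (tileO x L m j) = (ENNReal.ofReal (2*(L/m))) ^ n := by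
    rw [tileO, volume_pi_pi]
    simp [Real.volume_Ico]
  have hvC : volume (spCube n (ctr x L m j) (L/m)) = (ENNReal.ofReal (2*(L/m))) ^ n :=
    volSpCube ..
  have hfin : volume (tileO x L m j) ≠ ⊤ := by
    rw [hvO]; exact pow_ne_top ofReal_ne_top
  rw [measure_diff (tileO_subset j) (measTileO j).nullMeasurableSet hfin, hvO, hvC,
    tsub_self]

end St6
end Tiles
noncomputable section Cover
namespace St6
variable {n m : ℕ} {x : Fin n → ℝ} {L : ℝ} {w : (Fin n → ℝ) × ℝ → ℝ≥0∞}

lemma time_cover (a σ h₀ : ℝ) (hσ : 0 < σ) (hh : 0 < h₀) :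
    Ioc a (a + σ) ⊆ ⋃ i ∈ Finset.range ⌈σ/h₀⌉₊, Ioc (a + i*h₀) (a + i*h₀ + h₀) := by
  intro t' ht'
  obtain ⟨h1, h2⟩ := ht'
  set e := t' - a with he
  have he0 : 0 < e := by simp [he]; linarith
  have heσ : e ≤ σ := by simp [he]; linarith
  set c := ⌈e/h₀⌉₊ with hc
  have hc1 : 1 ≤ c := Nat.one_le_iff_ne_zero.2 (by
    simp only [hc, ne_eq, Nat.ceil_eq_zero, not_le]
    positivity)
  have hcK : c ≤ ⌈σ/h₀⌉₊ := Nat.ceil_le_ceil (by gcongr)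
  refine Set.mem_biUnion (Finset.mem_range.2 ?_ : c - 1 ∈ Finset.range ⌈σ/h₀⌉₊) ?_
  · omega
  · have hcast : ((c-1 : ℕ) : ℝ) = (c : ℝ) - 1 := by
      push_cast [Nat.cast_sub hc1]; ring
    constructor
    · have hlt : (c : ℝ) < e/h₀ + 1 := Nat.ceil_lt_add_one (by positivity)
      have : ((c-1:ℕ) : ℝ) * h₀ < e := by
        rw [hcast]
        calc ((c:ℝ) - 1) * h₀ < (e/h₀) * h₀ := by nlinarith
          _ = e := by field_simp
      linarith
    · have hge : e/h₀ ≤ (c : ℝ) := Nat.le_ceil _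
      have : e ≤ ((c-1:ℕ) : ℝ) * h₀ + h₀ := by
        rw [hcast]
        calc e = (e/h₀) * h₀ := by field_simp
          _ ≤ (c : ℝ) * h₀ := by nlinarith
          _ = ((c:ℝ) - 1) * h₀ + h₀ := by ring
      linarith

lemma prod_disjoint {s s' : Set (Fin n → ℝ)} (h : Disjoint s s') (J : Set ℝ) :
    Disjoint (s ×ˢ J) (s' ×ˢ J) := by
  rw [Set.disjoint_left] at h ⊢
  rintro ⟨y, r⟩ ⟨hy, hr⟩ ⟨hy', _⟩
  exact h hy hy'

lemma tiles_sum_le (hL : 0 < L) (hm : 0 < m) (J : Set ℝ) (hJ : MeasurableSet J) :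
    ∑ j : Fin n → Fin m, mw n w (spCube n (ctr x L m j) (L/m) ×ˢ J)
      ≤ mw n w (spCube n x L ×ˢ J) := by
  have h1 : ∀ j : Fin n → Fin m,
      mw n w (spCube n (ctr x L m j) (L/m) ×ˢ J) ≤ mw n w (tileO x L m j ×ˢ J) := by
    intro j
    have hsub : spCube n (ctr x L m j) (L/m) ×ˢ J
        ⊆ (tileO x L m j ×ˢ J) ∪ ((spCube n (ctr x L m j) (L/m) \ tileO x L m j) ×ˢ J) := by
      rintro ⟨y, r⟩ ⟨hy, hr⟩
      by_cases hyo : y ∈ tileO x L m j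
      · exact Or.inl ⟨hyo, hr⟩
      · exact Or.inr ⟨⟨hy, hyo⟩, hr⟩
    have hz : mw n w ((spCube n (ctr x L m j) (L/m) \ tileO x L m j) ×ˢ J) = 0 := by
      apply mw_null
      rw [volProd, vol_tile_diff hL hm, zero_mul]
    calc mw n w (spCube n (ctr x L m j) (L/m) ×ˢ J)
        ≤ mw n w (tileO x L m j ×ˢ J)
          + mw n w ((spCube n (ctr x L m j) (L/m) \ tileO x L m j) ×ˢ J) :=
          le_trans (measure_mono hsub) (measure_union_le _ _)
      _ = mw n w (tileO x L m j ×ˢ J) := by rw [hz, add_zero]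
  calc ∑ j : Fin n → Fin m, mw n w (spCube n (ctr x L m j) (L/m) ×ˢ J)
      ≤ ∑ j : Fin n → Fin m, mw n w (tileO x L m j ×ˢ J) := Finset.sum_le_sum fun j _ => h1 j
    _ = mw n w (⋃ j ∈ (Finset.univ : Finset (Fin n → Fin m)), tileO x L m j ×ˢ J) := by
        rw [measure_biUnion_finset]
        · intro j _ j' _ hjj'
          exact prod_disjoint (tileO_disjoint hL hm (Set.mem_univ j) (Set.mem_univ j') hjj') J
        · intro j _
          exact (measTileO j).prod hJ
    _ ≤ mw n w (spCube n x L ×ˢ J) := by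
        apply measure_mono
        intro z hz
        simp only [Set.mem_iUnion] at hz
        obtain ⟨j, _, hj⟩ := hz
        exact ⟨tile_subset hL hm j (tileO_subset j hj.1), hj.2⟩

end St6
end Cover
noncomputable section Step
namespace St6
variable {n : ℕ} {p γ α β : ℝ} {w : (Fin n → ℝ) × ℝ → ℝ≥0∞}

lemma box_eq_minus (n : ℕ) (p : ℝ) (y : Fin n → ℝ) (ℓ γ c : ℝ) :
    spCube n y ℓ ×ˢ Ioo c (c + (1-γ)*ℓ^p) = pRectMinus n p y (c + ℓ^p) ℓ γ := by
  rw [pRectMinus]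
  congr 1
  have e1 : c + ℓ^p - ℓ^p = c := by ring
  have e2 : c + ℓ^p - γ*ℓ^p = c + (1-γ)*ℓ^p := by ring
  rw [e1, e2]

set_option maxHeartbeats 4000000 in
lemma step (hp : 1 < p) (hγ0 : 0 < γ) (hγ1 : γ < 1) (hα0 : 0 < α) (hα1 : α < 1)
    (hβ0 : 0 < β) (hβ1 : β < 1)
    (hqmc : QualMeasCond n p γ α β w)
    (x : Fin n → ℝ) (t L σ : ℝ) (hL : 0 < L) (hσ0 : 0 ≤ σ)
    (hσ : σ ≤ (1-γ)^2 * L^p / 4) :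
    mw n w (pRectMinus n p x t L γ)
      ≤ (1 + (⌈(2:ℝ)^p⌉₊ : ℝ≥0∞) * ((ENNReal.ofReal β)⁻¹) ^ ⌈(2:ℝ)^p⌉₊)
          * mw n w (pRectMinus n p x (t+σ) L γ) := by
  classical
  set κ := ⌈(2:ℝ)^p⌉₊ with hκdef
  set bκ : ℝ≥0∞ := ((ENNReal.ofReal β)⁻¹) ^ κ with hbκdef
  have hC1 : (1:ℝ≥0∞) ≤ 1 + (κ : ℝ≥0∞) * bκ := le_self_add
  rcases eq_or_lt_of_le hσ0 with h0 | hσpos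
  · rw [← h0, add_zero]
    exact le_mul_of_one_le_left zero_le hC1
  have hLp : 0 < L^p := Real.rpow_pos_of_pos hL p
  have hγ' : 0 < 1 - γ := by linarith
  set H := (1-γ)*L^p with hH
  have hHpos : 0 < H := by positivity
  have hσH : σ ≤ (1-γ)*H/4 := by rw [hH]; nlinarith
  set a := t - L^p with ha
  set Q := spCube n x L with hQ
  have hMt : pRectMinus n p x t L γ = Q ×ˢ Ioo a (a+H) := by
    rw [pRectMinus]
    congr 1
    have e2 : t - γ*L^p = a + H := by rw [ha, hH]; ring
    rw [e2]
  have hMtσ : pRectMinus n p x (t+σ) L γ = Q ×ˢ Ioo (a+σ) (a+σ+H) := by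
    rw [pRectMinus]
    congr 1
    have e1 : t + σ - L^p = a + σ := by rw [ha]; ring
    have e2 : t + σ - γ*L^p = a + σ + H := by rw [ha, hH]; ring
    rw [e1, e2]
  -- choice of the subdivision parameter m
  have hex : ∃ k : ℕ, 2 ≤ k ∧ (1-γ)*(L/(k:ℝ))^p ≤ σ := by
    have hppos : 0 < p := by linarith
    set r := (σ/(1-γ))^(1/p) with hr
    have hrpos : 0 < r := by
      apply Real.rpow_pos_of_pos; positivity
    have hrp : r^p = σ/(1-γ) := by
      rw [hr, one_div, Real.rpow_inv_rpow (by positivity) (ne_of_gt hppos)]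
    refine ⟨max 2 ⌈L/r⌉₊, le_max_left _ _, ?_⟩
    set k := max 2 ⌈L/r⌉₊ with hk
    have hk0 : 0 < (k:ℝ) := by
      have : 2 ≤ k := le_max_left _ _
      have : (2:ℝ) ≤ k := by exact_mod_cast this
      linarith
    have hLr : L/r ≤ (k:ℝ) := by
      calc L/r ≤ (⌈L/r⌉₊ : ℝ) := Nat.le_ceil _
        _ ≤ (k : ℝ) := by exact_mod_cast le_max_right 2 ⌈L/r⌉₊
    have hLk : L/(k:ℝ) ≤ r := by
      rw [div_le_iff₀ hk0]
      calc L = (L/r)*r := by field_simp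
        _ ≤ (k:ℝ)*r := by nlinarith
        _ = r*(k:ℝ) := by ring
    have : (L/(k:ℝ))^p ≤ r^p :=
      Real.rpow_le_rpow (by positivity) hLk (le_of_lt hppos)
    rw [hrp] at this
    calc (1-γ)*(L/(k:ℝ))^p ≤ (1-γ)*(σ/(1-γ)) := by nlinarith
      _ = σ := by field_simp
  obtain ⟨m, hm2, hmσ, hmmin⟩ :
      ∃ m : ℕ, 2 ≤ m ∧ (1-γ)*(L/(m:ℝ))^p ≤ σ ∧
        ∀ k < m, ¬(2 ≤ k ∧ (1-γ)*(L/(k:ℝ))^p ≤ σ) :=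
    ⟨Nat.find hex, (Nat.find_spec hex).1, (Nat.find_spec hex).2,
      fun k hk => Nat.find_min hex hk⟩
  have hm0 : 0 < m := by omega
  have hmR : (2:ℝ) ≤ (m:ℝ) := by exact_mod_cast hm2
  set ℓ := L/(m:ℝ) with hℓ
  have hℓpos : 0 < ℓ := by rw [hℓ]; positivity
  have hℓp : 0 < ℓ^p := Real.rpow_pos_of_pos hℓpos p
  set h₀ := (1-γ)*ℓ^p with hh₀def
  set Δ := (1+γ)*ℓ^p with hΔdef
  have hh₀ : 0 < h₀ := by positivity
  have hΔ : 0 < Δ := by rw [hΔdef]; nlinarith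
  have hh₀Δ : h₀ ≤ Δ := by rw [hh₀def, hΔdef]; nlinarith
  have hh₀σ : h₀ ≤ σ := hmσ
  have hℓL : ℓ ≤ L := by
    rw [hℓ, div_le_iff₀ (by positivity)]; nlinarith
  have hℓpLp : ℓ^p ≤ L^p := Real.rpow_le_rpow (le_of_lt hℓpos) hℓL (by linarith)
  have hh₀H : h₀ ≤ H := by rw [hh₀def, hH]; nlinarith
  have h2ℓp : 2*ℓ^p ≤ H := by
    have : (1-γ)*ℓ^p ≤ σ := hmσ
    have hℓσ : ℓ^p ≤ σ/(1-γ) := by rw [le_div_iff₀ hγ']; nlinarith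
    have : σ/(1-γ) ≤ H/4 := by rw [div_le_iff₀ hγ']; nlinarith
    linarith
  have h2p : (0:ℝ) < (2:ℝ)^p := Real.rpow_pos_of_pos (by norm_num) p
  -- σ < 2^p * h₀
  have f2 : σ < (2:ℝ)^p * h₀ := by
    rcases eq_or_lt_of_le hm2 with hm2' | hm3
    · have hm2'' : (m:ℝ) = 2 := by exact_mod_cast hm2'.symm
      have : h₀ = (1-γ)*(L^p/(2:ℝ)^p) := by
        rw [hh₀def, hℓ, hm2'', Real.div_rpow (le_of_lt hL) (by norm_num)]
      rw [this]
      have : σ < (1-γ)*L^p := by nlinarith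
      calc σ < (1-γ)*L^p := this
        _ = (2:ℝ)^p * ((1-γ)*(L^p/(2:ℝ)^p)) := by field_simp
    · have hmin := hmmin (m-1) (show m - 1 < m by omega)
      rw [not_and_or] at hmin
      have hm1ge2 : 2 ≤ m - 1 := by omega
      have hσlt : σ < (1-γ)*(L/((m-1:ℕ):ℝ))^p := by
        rcases hmin with h | h
        · exact absurd hm1ge2 h
        · push_neg at h; exact h
      have hcast : ((m-1:ℕ):ℝ) = (m:ℝ) - 1 := by
        push_cast [Nat.cast_sub (show 1 ≤ m by omega)]; ring
      have hm1pos : 0 < (m:ℝ) - 1 := by linarith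
      have hdivle : L/((m:ℝ)-1) ≤ 2*ℓ := by
        rw [div_le_iff₀ hm1pos, hℓ]
        have hLm : L/(m:ℝ)*(m:ℝ) = L := by field_simp
        nlinarith
      have : (L/((m:ℝ)-1))^p ≤ (2*ℓ)^p :=
        Real.rpow_le_rpow (by positivity) hdivle (by linarith)
      have h2ℓ : (2*ℓ)^p = (2:ℝ)^p * ℓ^p :=
        Real.mul_rpow (by norm_num) (le_of_lt hℓpos)
      rw [hcast] at hσlt
      calc σ < (1-γ)*(L/((m:ℝ)-1))^p := hσlt
        _ ≤ (1-γ)*((2:ℝ)^p * ℓ^p) := by nlinarith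
        _ = (2:ℝ)^p * h₀ := by rw [hh₀def]; ring
  set K := ⌈σ/h₀⌉₊ with hKdef
  have hK1 : 1 ≤ K := Nat.one_le_iff_ne_zero.2 (by
    simp only [hKdef, ne_eq, Nat.ceil_eq_zero, not_le]; positivity)
  have hKκ : K ≤ κ := by
    apply Nat.ceil_le_ceil
    rw [div_le_iff₀ hh₀]; nlinarith
  have hKσ : σ ≤ K*h₀ := by
    have := Nat.le_ceil (σ/h₀)
    rw [div_le_iff₀ hh₀] at this
    exact this
  have hKub : (K:ℝ) < σ/h₀ + 1 := Nat.ceil_lt_add_one (by positivity)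
  set ki : ℕ → ℕ := fun i => ⌈(σ - i*h₀)/Δ⌉₊ with hkidef
  have hki_le : ∀ i, ki i ≤ κ := by
    intro i
    have h1 : (σ - i*h₀)/Δ ≤ σ/h₀ := by
      apply div_le_div₀ (by positivity)
      · nlinarith [Nat.cast_nonneg (α := ℝ) i]
      · exact hh₀
      · exact hh₀Δ
    calc ki i ≤ ⌈σ/h₀⌉₊ := Nat.ceil_le_ceil h1
      _ ≤ κ := hKκ
  have hki1 : ∀ i, σ ≤ i*h₀ + (ki i)*Δ := by
    intro i
    rcases le_or_gt (σ - i*h₀) 0 with hc | hc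
    · have : (0:ℝ) ≤ (ki i)*Δ := by positivity
      linarith
    · have h1 : (σ - i*h₀)/Δ ≤ ((ki i : ℕ):ℝ) := Nat.le_ceil _
      rw [div_le_iff₀ hΔ] at h1
      linarith
  have hki2 : ∀ i < K, ((i:ℝ)+1)*h₀ + (ki i)*Δ ≤ H + σ := by
    intro i hiK
    rcases le_or_gt (σ - i*h₀) 0 with hc | hc
    · have hki0 : ki i = 0 := by
        simp only [hkidef, Nat.ceil_eq_zero]
        exact div_nonpos_of_nonpos_of_nonneg hc (le_of_lt hΔ)
      rw [hki0]
      have hiK' : (i:ℝ) + 1 ≤ (K:ℝ) := by exact_mod_cast hiK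
      have hKh : (K:ℝ)*h₀ < σ + h₀ := by
        have h' := mul_lt_mul_of_pos_right hKub hh₀
        have hdiv : σ/h₀*h₀ = σ := div_mul_cancel₀ σ (ne_of_gt hh₀)
        nlinarith [h']
      have hmul := mul_le_mul_of_nonneg_right hiK' (le_of_lt hh₀)
      push_cast
      nlinarith [hmul]
    · have h1 : ((ki i : ℕ):ℝ) < (σ - i*h₀)/Δ + 1 := Nat.ceil_lt_add_one (by positivity)
      have h2 : ((ki i:ℕ):ℝ)*Δ < σ - i*h₀ + Δ := by
        have h' := mul_lt_mul_of_pos_right h1 hΔ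
        have hdiv : (σ - i*h₀)/Δ*Δ = σ - i*h₀ := div_mul_cancel₀ _ (ne_of_gt hΔ)
        nlinarith [h']
      have : h₀ + Δ ≤ H := by rw [hh₀def, hΔdef]; nlinarith
      nlinarith
  -- the measure estimates
  set T := Q ×ˢ Ioo (a+σ) (a+σ+H) with hT
  have hsplit : mw n w (Q ×ˢ Ioo a (a+H))
      ≤ mw n w (Q ×ˢ Ioc a (a+σ)) + mw n w T := by
    have hsub : Q ×ˢ Ioo a (a+H) ⊆ (Q ×ˢ Ioc a (a+σ)) ∪ T := by
      rintro ⟨y, r⟩ ⟨hy, hr1, hr2⟩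
      rcases le_or_gt r (a+σ) with hc | hc
      · exact Or.inl ⟨hy, hr1, hc⟩
      · exact Or.inr ⟨hy, hc, by linarith⟩
    exact le_trans (measure_mono hsub) (measure_union_le _ _)
  -- estimate for one layer
  have hlayer : ∀ i < K,
      mw n w (Q ×ˢ Ioc (a+i*h₀) (a+i*h₀+h₀)) ≤ bκ * mw n w T := by
    intro i hiK
    set o := a + i*h₀ with ho
    set o' := o + (ki i)*Δ with ho'
    have hsub1 : Q ×ˢ Ioc o (o+h₀) ⊆ (Q ×ˢ Ioo o (o+h₀)) ∪ (Q ×ˢ ({o+h₀} : Set ℝ)) := by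
      rintro ⟨y, r⟩ ⟨hy, hr1, hr2⟩
      rcases eq_or_lt_of_le hr2 with hc | hc
      · exact Or.inr ⟨hy, hc⟩
      · exact Or.inl ⟨hy, hr1, hc⟩
    have hnull : mw n w (Q ×ˢ ({o+h₀} : Set ℝ)) = 0 := by
      apply mw_null
      rw [volProd, Real.volume_singleton, mul_zero]
    have hstep1 : mw n w (Q ×ˢ Ioc o (o+h₀)) ≤ mw n w (Q ×ˢ Ioo o (o+h₀)) := by
      calc mw n w (Q ×ˢ Ioc o (o+h₀))
          ≤ mw n w (Q ×ˢ Ioo o (o+h₀)) + mw n w (Q ×ˢ ({o+h₀} : Set ℝ)) :=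
            le_trans (measure_mono hsub1) (measure_union_le _ _)
        _ = mw n w (Q ×ˢ Ioo o (o+h₀)) := by rw [hnull, add_zero]
    have hcover : Q ×ˢ Ioo o (o+h₀)
        ⊆ ⋃ j ∈ (Finset.univ : Finset (Fin n → Fin m)),
            (spCube n (ctr x L m j) ℓ ×ˢ Ioo o (o+h₀)) := by
      rintro ⟨y, r⟩ ⟨hy, hr⟩
      have := tile_cover hL hm0 (x := x) hy
      rw [Set.mem_iUnion] at this
      obtain ⟨j, hj⟩ := this
      rw [← hℓ] at hj
      exact Set.mem_biUnion (Finset.mem_univ j) ⟨hj, hr⟩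
    have hstep2 : mw n w (Q ×ˢ Ioo o (o+h₀))
        ≤ ∑ j : Fin n → Fin m, mw n w (spCube n (ctr x L m j) ℓ ×ˢ Ioo o (o+h₀)) :=
      le_trans (measure_mono hcover) (measure_biUnion_finset_le _ _)
    have hstep3 : ∀ j : Fin n → Fin m,
        mw n w (spCube n (ctr x L m j) ℓ ×ˢ Ioo o (o+h₀))
          ≤ bκ * mw n w (spCube n (ctr x L m j) ℓ ×ˢ Ioo o' (o'+h₀)) := by
      intro j
      have hb1 : mw n w (spCube n (ctr x L m j) ℓ ×ˢ Ioo o (o+h₀))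
          ≤ ((ENNReal.ofReal β)⁻¹)^(ki i)
            * mw n w (spCube n (ctr x L m j) ℓ ×ˢ Ioo o' (o'+h₀)) := by
        rw [hh₀def, box_eq_minus n p _ ℓ γ o, box_eq_minus n p _ ℓ γ o']
        have := chain' hp hγ1 hα0 hα1 hβ0 hβ1 hqmc (ctr x L m j) ℓ hℓpos (ki i) (o + ℓ^p)
        have harg : o + ℓ^p + (ki i)*((1+γ)*ℓ^p) = o' + ℓ^p := by
          rw [ho', hΔdef]; ring
        rw [harg] at this
        exact this
      have hmono : ((ENNReal.ofReal β)⁻¹)^(ki i) ≤ bκ := by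
        rw [hbκdef]
        apply pow_le_pow_right₀ _ (hki_le i)
        rw [ENNReal.one_le_inv]
        exact ENNReal.ofReal_le_one.mpr (le_of_lt hβ1)
      exact le_trans hb1 (mul_le_mul_left hmono _)
    have hstep4 : ∑ j : Fin n → Fin m,
        mw n w (spCube n (ctr x L m j) ℓ ×ˢ Ioo o' (o'+h₀))
          ≤ mw n w (Q ×ˢ Ioo o' (o'+h₀)) := by
      rw [hQ, hℓ]
      exact tiles_sum_le hL hm0 _ measurableSet_Ioo
    have hstep5 : mw n w (Q ×ˢ Ioo o' (o'+h₀)) ≤ mw n w T := by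
      apply measure_mono
      apply Set.prod_mono_right
      apply Ioo_subset_Ioo
      · rw [ho', ho]
        have := hki1 i
        linarith
      · rw [ho', ho]
        have := hki2 i hiK
        push_cast
        push_cast at this ⊢
        linarith
    calc mw n w (Q ×ˢ Ioc o (o+h₀))
        ≤ mw n w (Q ×ˢ Ioo o (o+h₀)) := hstep1
      _ ≤ ∑ j : Fin n → Fin m, mw n w (spCube n (ctr x L m j) ℓ ×ˢ Ioo o (o+h₀)) := hstep2
      _ ≤ ∑ j : Fin n → Fin m,
            bκ * mw n w (spCube n (ctr x L m j) ℓ ×ˢ Ioo o' (o'+h₀)) :=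
          Finset.sum_le_sum fun j _ => hstep3 j
      _ = bκ * ∑ j : Fin n → Fin m,
            mw n w (spCube n (ctr x L m j) ℓ ×ˢ Ioo o' (o'+h₀)) := by
          rw [Finset.mul_sum]
      _ ≤ bκ * mw n w (Q ×ˢ Ioo o' (o'+h₀)) := mul_le_mul_right hstep4 _
      _ ≤ bκ * mw n w T := mul_le_mul_right hstep5 _
  -- sliver estimate
  have hsliver : mw n w (Q ×ˢ Ioc a (a+σ)) ≤ (κ : ℝ≥0∞) * bκ * mw n w T := by
    have hcov : Q ×ˢ Ioc a (a+σ)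
        ⊆ ⋃ i ∈ Finset.range K, Q ×ˢ Ioc (a+i*h₀) (a+i*h₀+h₀) := by
      rintro ⟨y, r⟩ ⟨hy, hr⟩
      have := time_cover a σ h₀ hσpos hh₀ hr
      rw [Set.mem_iUnion] at this
      obtain ⟨i, hi⟩ := this
      rw [Set.mem_iUnion] at hi
      obtain ⟨hiK, hmem⟩ := hi
      exact Set.mem_biUnion hiK ⟨hy, hmem⟩
    calc mw n w (Q ×ˢ Ioc a (a+σ))
        ≤ ∑ i ∈ Finset.range K, mw n w (Q ×ˢ Ioc (a+i*h₀) (a+i*h₀+h₀)) :=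
          le_trans (measure_mono hcov) (measure_biUnion_finset_le _ _)
      _ ≤ ∑ i ∈ Finset.range K, bκ * mw n w T :=
          Finset.sum_le_sum fun i hi => hlayer i (Finset.mem_range.1 hi)
      _ = (K : ℝ≥0∞) * (bκ * mw n w T) := by
          rw [Finset.sum_const, Finset.card_range, nsmul_eq_mul]
      _ ≤ (κ : ℝ≥0∞) * (bκ * mw n w T) := by
          apply mul_le_mul_left
          exact_mod_cast hKκ
      _ = (κ : ℝ≥0∞) * bκ * mw n w T := by rw [mul_assoc]
  -- conclusion
  rw [hMt, hMtσ]
  have hsecond : mw n w (Q ×ˢ Ioo (a+σ) (a+H)) ≤ mw n w T := by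
    apply measure_mono
    apply Set.prod_mono_right
    apply Ioo_subset_Ioo le_rfl
    linarith
  calc mw n w (Q ×ˢ Ioo a (a+H))
      ≤ mw n w (Q ×ˢ Ioc a (a+σ)) + mw n w T := hsplit
    _ ≤ (κ : ℝ≥0∞) * bκ * mw n w T + mw n w T := add_le_add_left hsliver _
    _ = (1 + (κ:ℝ≥0∞) * bκ) * mw n w T := by ring
end St6
end Step
open St6 in
/-- Let `0 < γ, α, β < 1` and let `w` satisfy the qualitative measure
condition with parameters `(γ, α, β)`. Then for every `θ > 0` there is `C ≥ 1`
(depending only on `p, γ, β, θ`) such that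
`w(R^-(γ)) ≤ C · w(R^-(γ) + (0, ωL^p))` for every parabolic rectangle `R` of side
length `L` and every `0 ≤ ω ≤ θ`. -/
theorem statement6 (n : ℕ) (hn : 1 ≤ n) (p : ℝ) (hp : 1 < p)
    (γ α β : ℝ) (hγ0 : 0 < γ) (hγ1 : γ < 1) (hα0 : 0 < α) (hα1 : α < 1)
    (hβ0 : 0 < β) (hβ1 : β < 1)
    (w : (Fin n → ℝ) × ℝ → ℝ≥0∞) (hw : IsWeight n w)
    (hqmc : QualMeasCond n p γ α β w) :
    ∀ θ : ℝ, 0 < θ → ∃ C : ℝ≥0∞, 1 ≤ C ∧ C ≠ ⊤ ∧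
      ∀ (x : Fin n → ℝ) (t L : ℝ), 0 < L → ∀ ω : ℝ, 0 ≤ ω → ω ≤ θ →
        (∫⁻ z in pRectMinus n p x t L γ, w z ∂volume) ≤
          C * ∫⁻ z in tAdd n (pRectMinus n p x t L γ) (ω * L ^ p), w z ∂volume := by
  intro θ hθ
  set C₁ : ℝ≥0∞ :=
    1 + (⌈(2:ℝ)^p⌉₊ : ℝ≥0∞) * ((ENNReal.ofReal β)⁻¹) ^ ⌈(2:ℝ)^p⌉₊ with hC₁def
  set N := ⌈4*θ/(1-γ)^2⌉₊ + 1 with hNdef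
  have hγ' : 0 < 1 - γ := by linarith
  have hC₁1 : (1:ℝ≥0∞) ≤ C₁ := le_self_add
  have hC₁top : C₁ ≠ ⊤ := by
    apply ENNReal.add_ne_top.2
    refine ⟨one_ne_top, ?_⟩
    apply ENNReal.mul_ne_top (natCast_ne_top _)
    apply ENNReal.pow_ne_top
    rw [ENNReal.inv_ne_top]
    simp only [ne_eq, ENNReal.ofReal_eq_zero, not_le]
    exact hβ0
  refine ⟨C₁ ^ N, one_le_pow_of_one_le' hC₁1 N, ENNReal.pow_ne_top hC₁top, ?_⟩
  intro x t L hL ω hω hωθ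
  have hLp : 0 < L^p := Real.rpow_pos_of_pos hL p
  have hN0 : 0 < N := Nat.succ_pos _
  have hNR : (0:ℝ) < (N:ℝ) := by exact_mod_cast hN0
  set σ := ω * L^p / N with hσdef
  have hσ0 : 0 ≤ σ := by positivity
  have hσle : σ ≤ (1-γ)^2 * L^p / 4 := by
    have hceil : 4*θ/(1-γ)^2 ≤ (N:ℝ) := by
      calc 4*θ/(1-γ)^2 ≤ (⌈4*θ/(1-γ)^2⌉₊ : ℝ) := Nat.le_ceil _
        _ ≤ (N:ℝ) := by rw [hNdef]; push_cast; linarith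
    have h4θ : 4*θ ≤ (N:ℝ)*(1-γ)^2 := by
      rw [div_le_iff₀ (by positivity)] at hceil
      linarith
    have h1 : σ ≤ θ * L^p / N := by
      rw [hσdef]
      gcongr
    have h2 : θ * L^p / (N:ℝ) ≤ (1-γ)^2 * L^p / 4 := by
      rw [div_le_div_iff₀ hNR (by norm_num)]
      nlinarith
    linarith
  have key : ∀ j : ℕ, mw n w (pRectMinus n p x t L γ)
      ≤ C₁^j * mw n w (pRectMinus n p x (t + j*σ) L γ) := by
    intro j
    induction j with
    | zero => simp
    | succ j ih =>
      have hstep := step hp hγ0 hγ1 hα0 hα1 hβ0 hβ1 hqmc x (t + j*σ) L σ hL hσ0 hσle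
      rw [← hC₁def] at hstep
      calc mw n w (pRectMinus n p x t L γ)
          ≤ C₁^j * mw n w (pRectMinus n p x (t + j*σ) L γ) := ih
        _ ≤ C₁^j * (C₁ * mw n w (pRectMinus n p x (t + j*σ + σ) L γ)) :=
            mul_le_mul_right hstep _
        _ = C₁^(j+1) * mw n w (pRectMinus n p x (t + (j+1:ℕ)*σ) L γ) := by
            rw [← mul_assoc, ← pow_succ]
            congr 3
            push_cast; ring
  have hfin := key N
  have harg : t + (N:ℝ)*σ = t + ω*L^p := by
    rw [hσdef]; field_simp
  rw [harg] at hfin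
  rw [tAdd_minus n p x t L γ (ω*L^p),
    ← mw_apply (measMinus n p x t L γ),
    ← mw_apply (measMinus n p x (t + ω*L^p) L γ)]
  exact hfin
end
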